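/- Let A be a real symmetric positive definite d×d matrix and M a real symmetric positive semidefinite d×d matrix. Suppose ε_t, ε_s > 0 and there exists x ∈ ℝ^d with x^T M x ≥ ε_t and x^T A x ≤ ε_s. Then det(A + M) ≥ (1 + ε_t/(d·ε_s)) · det(A). -/

import Mathlib

/-!
Factor `A = Sᵀ S` with `S` invertible and put `N = S⁻ᵀ M S⁻¹`, a positive semidefinite matrix with
`tr N = tr (A⁻¹ M)`. Then `A + M = Sᵀ (1 + N) S`, so `det (A + M) = det A · ∏ (1 + λᵢ)` over the
eigenvalues `λᵢ ≥ 0` of `N`, which is at least `(1 + tr N) · det A`. On the other hand, with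
`y = S x` Cauchy–Schwarz gives `xᵀ M x = yᵀ N y ≤ tr N · ‖y‖² = tr N · xᵀ A x`, hence
`ε_t ≤ tr N · ε_s`.
-/

open Matrix

open scoped MatrixOrder

theorem Finset.one_add_sum_le_prod_one_add {ι R : Type*} [CommSemiring R] [PartialOrder R]
    [IsOrderedRing R] (s : Finset ι) {f : ι → R} (hf : ∀ i ∈ s, 0 ≤ f i) :
    1 + ∑ i ∈ s, f i ≤ ∏ i ∈ s, (1 + f i) := by
  classical
  induction s using Finset.induction_on with
  | empty => simp
  | insert a s ha ih =>
    rw [sum_insert ha, prod_insert ha]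
    have hfa : 0 ≤ f a := hf a (mem_insert_self a s)
    have hfs : ∀ i ∈ s, 0 ≤ f i := fun i hi => hf i (mem_insert_of_mem hi)
    calc 1 + (f a + ∑ i ∈ s, f i)
        ≤ 1 + (f a + ∑ i ∈ s, f i) + f a * ∑ i ∈ s, f i :=
          le_add_of_nonneg_right (mul_nonneg hfa (sum_nonneg hfs))
      _ = (1 + f a) * (1 + ∑ i ∈ s, f i) := by ring
      _ ≤ (1 + f a) * ∏ i ∈ s, (1 + f i) :=
          mul_le_mul_of_nonneg_left (ih hfs) (add_nonneg zero_le_one hfa)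

namespace Matrix

variable {m n R : Type*} [Fintype m] [Fintype n]

theorem mulVec_dotProduct_mulVec_le_trace_mul [CommRing R] [LinearOrder R] [IsStrictOrderedRing R]
    (B : Matrix m n R) (y : n → R) :
    B *ᵥ y ⬝ᵥ B *ᵥ y ≤ (Bᵀ * B).trace * (y ⬝ᵥ y) := by
  have htrace : (Bᵀ * B).trace = ∑ i, ∑ j, B i j ^ 2 := by
    simp only [trace, diag, mul_apply, transpose_apply, sq]
    exact Finset.sum_comm
  rw [htrace, Finset.sum_mul]
  simp only [dotProduct, mulVec, ← sq]
  exact Finset.sum_le_sum fun i _ => Finset.sum_mul_sq_le_sq_mul_sq _ _ _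

section Congruence

variable [CommRing R]

theorem dotProduct_transpose_mul_mul_mulVec (S N : Matrix n n R) (x : n → R) :
    x ⬝ᵥ (Sᵀ * N * S) *ᵥ x = S *ᵥ x ⬝ᵥ N *ᵥ (S *ᵥ x) := by
  rw [← mulVec_mulVec, ← mulVec_mulVec, dotProduct_mulVec, vecMul_transpose]

theorem dotProduct_transpose_mul_self_mulVec (S : Matrix n n R) (x : n → R) :
    x ⬝ᵥ (Sᵀ * S) *ᵥ x = S *ᵥ x ⬝ᵥ S *ᵥ x := by
  rw [← mulVec_mulVec, dotProduct_mulVec, vecMul_transpose]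

variable [DecidableEq n]

theorem trace_inv_transpose_mul_mul_inv (S M : Matrix n n R) :
    (S⁻¹ᵀ * M * S⁻¹).trace = ((Sᵀ * S)⁻¹ * M).trace := by
  rw [trace_mul_cycle, Matrix.mul_inv_rev, transpose_nonsing_inv]

variable {S : Matrix n n R} (hS : IsUnit S.det)
include hS

theorem transpose_mul_mul_inv_transpose_mul_mul_inv (M : Matrix n n R) :
    Sᵀ * (S⁻¹ᵀ * M * S⁻¹) * S = M := by
  rw [transpose_nonsing_inv, Matrix.mul_assoc, nonsing_inv_mul_cancel_right _ (Sᵀ⁻¹ * M) hS,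
    mul_nonsing_inv_cancel_left _ M (isUnit_det_transpose S hS)]

theorem det_transpose_mul_self_add (M : Matrix n n R) :
    (Sᵀ * S + M).det = (Sᵀ * S).det * (1 + S⁻¹ᵀ * M * S⁻¹).det := by
  have hfactor : Sᵀ * S + M = Sᵀ * (1 + S⁻¹ᵀ * M * S⁻¹) * S := by
    rw [Matrix.mul_add, Matrix.add_mul, mul_one, transpose_mul_mul_inv_transpose_mul_mul_inv hS]
  rw [hfactor, det_mul, det_mul, det_mul]
  ring

end Congruence

variable [DecidableEq n]

theorem PosSemidef.dotProduct_mulVec_le_trace_mul {N : Matrix n n ℝ} (hN : N.PosSemidef)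
    (y : n → ℝ) : y ⬝ᵥ N *ᵥ y ≤ N.trace * (y ⬝ᵥ y) := by
  obtain ⟨B, rfl⟩ := CStarAlgebra.nonneg_iff_eq_star_mul_self.mp hN.nonneg
  rw [star_eq_conjTranspose, conjTranspose_eq_transpose_of_trivial,
    dotProduct_transpose_mul_self_mulVec]
  exact mulVec_dotProduct_mulVec_le_trace_mul B y

theorem PosSemidef.one_add_trace_le_det_one_add {N : Matrix n n ℝ} (hN : N.PosSemidef) :
    1 + N.trace ≤ (1 + N).det := by
  set U := hN.1.eigenvectorUnitary
  have hdet : (1 + N).det = ∏ i, (1 + hN.1.eigenvalues i) := by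
    conv_lhs =>
      rw [hN.1.spectral_theorem, ← map_one (Unitary.conjStarAlgAut ℝ _ U), ← map_add,
        Unitary.conjStarAlgAut_apply, det_mul, det_mul, mul_comm, ← mul_assoc, ← det_mul,
        Unitary.coe_star_mul_self, det_one, one_mul]
    rw [← diagonal_one, diagonal_add, det_diagonal]
    rfl
  rw [hdet, hN.1.trace_eq_sum_eigenvalues]
  exact Finset.one_add_sum_le_prod_one_add _ fun i _ => hN.eigenvalues_nonneg i

theorem PosSemidef.inv_transpose_mul_mul_inv {M : Matrix n n ℝ} (hM : M.PosSemidef)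
    (S : Matrix n n ℝ) : (S⁻¹ᵀ * M * S⁻¹).PosSemidef := by
  simpa [conjTranspose_eq_transpose_of_trivial] using hM.conjTranspose_mul_mul_same S⁻¹

theorem PosDef.exists_isUnit_det_eq_transpose_mul_self {A : Matrix n n ℝ} (hA : A.PosDef) :
    ∃ S : Matrix n n ℝ, IsUnit S.det ∧ A = Sᵀ * S := by
  obtain ⟨S, rfl⟩ := CStarAlgebra.nonneg_iff_eq_star_mul_self.mp hA.posSemidef.nonneg
  rw [star_eq_conjTranspose, conjTranspose_eq_transpose_of_trivial] at hA ⊢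
  refine ⟨S, ?_, rfl⟩
  have hdet := hA.det_pos
  rw [det_mul, det_transpose] at hdet
  exact isUnit_iff_ne_zero.mpr fun h => by simp [h] at hdet

variable {A M : Matrix n n ℝ}

theorem PosDef.trace_inv_mul_nonneg (hA : A.PosDef) (hM : M.PosSemidef) :
    0 ≤ (A⁻¹ * M).trace := by
  obtain ⟨S, -, rfl⟩ := hA.exists_isUnit_det_eq_transpose_mul_self
  exact trace_inv_transpose_mul_mul_inv S M ▸ (hM.inv_transpose_mul_mul_inv S).trace_nonneg

theorem PosDef.one_add_trace_inv_mul_mul_det_le_det_add (hA : A.PosDef) (hM : M.PosSemidef) :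
    (1 + (A⁻¹ * M).trace) * A.det ≤ (A + M).det := by
  obtain ⟨S, hS, rfl⟩ := hA.exists_isUnit_det_eq_transpose_mul_self
  rw [← trace_inv_transpose_mul_mul_inv, det_transpose_mul_self_add hS, mul_comm]
  exact mul_le_mul_of_nonneg_left (hM.inv_transpose_mul_mul_inv S).one_add_trace_le_det_one_add
    hA.det_pos.le

theorem PosDef.dotProduct_mulVec_le_trace_inv_mul_mul (hA : A.PosDef) (hM : M.PosSemidef)
    (x : n → ℝ) : x ⬝ᵥ M *ᵥ x ≤ (A⁻¹ * M).trace * (x ⬝ᵥ A *ᵥ x) := by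
  obtain ⟨S, hS, rfl⟩ := hA.exists_isUnit_det_eq_transpose_mul_self
  conv_lhs => rw [← transpose_mul_mul_inv_transpose_mul_mul_inv hS M]
  rw [dotProduct_transpose_mul_mul_mulVec, dotProduct_transpose_mul_self_mulVec,
    ← trace_inv_transpose_mul_mul_inv]
  exact (hM.inv_transpose_mul_mul_inv S).dotProduct_mulVec_le_trace_mul (S *ᵥ x)

end Matrix

theorem div_natCast_mul_le_of_le_mul {a b t : ℝ} (d : ℕ) (hb : 0 ≤ b) (ht : 0 ≤ t)
    (h : a ≤ t * b) : a / (d * b) ≤ t := by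
  rcases (mul_nonneg d.cast_nonneg hb).eq_or_lt with hdb | hdb
  · rwa [← hdb, div_zero]
  · have hd : (1 : ℝ) ≤ d := Nat.one_le_cast.mpr <| Nat.pos_of_ne_zero <| by
      rintro rfl
      simp at hdb
    rw [div_le_iff₀ hdb]
    nlinarith [mul_nonneg (mul_nonneg ht hb) (sub_nonneg.mpr hd)]

theorem dmq_det_growth_step_general
    (d : ℕ) (A M : Matrix (Fin d) (Fin d) ℝ)
    (hA : A.PosDef) (hM : M.PosSemidef)
    (εt εs : ℝ)
    (hx : ∃ x : Fin d → ℝ, εt ≤ x ⬝ᵥ M.mulVec x ∧ x ⬝ᵥ A.mulVec x ≤ εs) :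
    (1 + εt / (d * εs)) * A.det ≤ (A + M).det := by
  obtain ⟨x, hMx, hAx⟩ := hx
  have hεs : 0 ≤ εs := (hA.posSemidef.dotProduct_mulVec_nonneg x).trans hAx
  have hτ : 0 ≤ (A⁻¹ * M).trace := hA.trace_inv_mul_nonneg hM
  have hgain : εt / (d * εs) ≤ (A⁻¹ * M).trace := by
    refine div_natCast_mul_le_of_le_mul d hεs hτ ?_
    calc εt ≤ x ⬝ᵥ M *ᵥ x := hMx
      _ ≤ (A⁻¹ * M).trace * (x ⬝ᵥ A *ᵥ x) := hA.dotProduct_mulVec_le_trace_inv_mul_mul hM x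
      _ ≤ (A⁻¹ * M).trace * εs := mul_le_mul_of_nonneg_left hAx hτ
  calc (1 + εt / (d * εs)) * A.det ≤ (1 + (A⁻¹ * M).trace) * A.det := by
        gcongr
        exact hA.det_pos.le
    _ ≤ (A + M).det := hA.one_add_trace_inv_mul_mul_det_le_det_add hM

/-- **Single-step determinant growth.**
If `A` is symmetric positive definite, `M` is symmetric positive semidefinite, and
some direction `x` satisfies `xᵀ M x ≥ ε_t` and `xᵀ A x ≤ ε_s`, then
`det (A + M) ≥ (1 + ε_t / (d ε_s)) · det A`. -/
theorem dmq_det_growth_step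
    (d : ℕ) (A M : Matrix (Fin d) (Fin d) ℝ)
    (hA : A.PosDef) (hM : M.PosSemidef)
    (εt εs : ℝ) (hεt : 0 < εt) (hεs : 0 < εs)
    (hx : ∃ x : Fin d → ℝ, εt ≤ x ⬝ᵥ M.mulVec x ∧ x ⬝ᵥ A.mulVec x ≤ εs) :
    (1 + εt / (d * εs)) * A.det ≤ (A + M).det :=
  dmq_det_growth_step_general d A M hA hM εt εs hx
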